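/- arXiv:1610.01335 — 6 statements merged into one kernel-verified Lean document; each statement's English description precedes it below -/
import Mathlib

section
/- Let x ∈ L be such that the evaluation map H₂ → L given by h ↦ h • x is bijective, and let 𝔅 ⊆ L be a subset satisfying 𝔅 = {a • x : a ∈ 𝔄₁(𝔅)}. Then 𝔅 = {z • x : z ∈ 𝔄₂(𝔅)}, and the map 𝔄₂(𝔅) → 𝔅 given by z ↦ z • x is a bijection (so 𝔅 is a free 𝔄₂(𝔅)-module of rank one generated by x). (Abstract core of Theorem 1.2: a fractional ideal is free over its associated order in H₁ if and only if it is free over its associated order in H₂, for commuting Hopf–Galois structures.) -/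
/-- Abstract core of Theorem 1.2: `L` is a module over two rings `H₁`, `H₂` with commuting
actions. If the evaluation map `H₂ → L`, `h ↦ h • x` is bijective and the subset `𝔅 ⊆ L` is
freely generated by `x` over its associated order in `H₁`, then `𝔅` is the image of its
associated order in `H₂` under `z ↦ z • x`, and this map is a bijection from `𝔄₂(𝔅)` onto
`𝔅`. -/
theorem commuting_structures_free_transfer
    {H₁ H₂ L : Type*} [Ring H₁] [Ring H₂] [AddCommGroup L]
    [Module H₁ L] [Module H₂ L]
    (hcomm : ∀ (h₁ : H₁) (h₂ : H₂) (l : L), h₁ • (h₂ • l) = h₂ • (h₁ • l))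
    (x : L) (hx : Function.Bijective (fun h : H₂ => h • x))
    (𝔅 : Set L)
    (h𝔅 : 𝔅 = (fun a : H₁ => a • x) '' {a : H₁ | ∀ b ∈ 𝔅, a • b ∈ 𝔅}) :
    𝔅 = (fun z : H₂ => z • x) '' {z : H₂ | ∀ b ∈ 𝔅, z • b ∈ 𝔅} ∧
      Set.BijOn (fun z : H₂ => z • x) {z : H₂ | ∀ b ∈ 𝔅, z • b ∈ 𝔅} 𝔅 := by
  have hx𝔅 : x ∈ 𝔅 := by
    rw [h𝔅]
    exact ⟨1, fun b hb => by simpa using hb, one_smul _ _⟩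
  have hmaps : ∀ z ∈ {z : H₂ | ∀ b ∈ 𝔅, z • b ∈ 𝔅}, z • x ∈ 𝔅 := fun z hz => hz x hx𝔅
  have hsurj : ∀ b ∈ 𝔅, ∃ z ∈ {z : H₂ | ∀ b ∈ 𝔅, z • b ∈ 𝔅}, z • x = b := by
    intro b hb
    obtain ⟨z, hzx⟩ := hx.surjective b
    refine ⟨z, ?_, hzx⟩
    intro b' hb'
    rw [h𝔅] at hb'
    obtain ⟨a, ha, rfl⟩ := hb'
    have : z • a • x = a • (z • x) := (hcomm a z x).symm
    rw [this]; simp only [] at hzx; rw [hzx]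
    exact ha b hb
  constructor
  · apply Set.eq_of_subset_of_subset
    · intro b hb
      obtain ⟨z, hz, hzx⟩ := hsurj b hb
      exact ⟨z, hz, hzx⟩
    · rintro _ ⟨z, hz, rfl⟩
      exact hmaps z hz
  · exact ⟨hmaps, fun a _ b _ h => hx.injective h,
      fun b hb => by obtain ⟨z, hz, hzx⟩ := hsurj b hb; exact ⟨z, hz, hzx⟩⟩
end

section
/- Let N' = Cent_{Perm(X)}(N) be the centralizer of N in Perm(X), which is a regular subgroup normalized by ρ(G), and let E[N'] carry the analogous G-action (g acting on coefficients as Galois automorphisms and on N' by conjugation via ρ). Suppose f : X → E is G-fixed. Then every G-fixed m : X → E has the form m = z • f for some G-fixed z ∈ E[N] if and only if every G-fixed m : X → E has the form m = z' • f for some G-fixed z' ∈ E[N']. (Theorem 1.1, stated at the level of the fixed-point model M^G of L: an element generates L as an H₁-module if and only if it generates L as an H₂-module, for commuting Hopf–Galois structures.) -/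
/-- The action of the group algebra `E[N]` of a subgroup `N ≤ Perm X` on `Map(X, E)`:
`(η • f)(y) = f(η⁻¹ y)`, extended `E`-linearly. -/
noncomputable def permAct {E X : Type*} [Field E]
    (N : Subgroup (Equiv.Perm X))
    (z : MonoidAlgebra E ↥N) (f : X → E) : X → E :=
  fun y => Finsupp.sum z.coeff fun η c => c * f ((η : Equiv.Perm X)⁻¹ y)

/-- `f : X → E` is fixed by the semilinear action of `G = Gal(E/K)` on `Map(X, E)` given by
`(g · f)(y) = g (f ((ρ g)⁻¹ y))`. -/
def IsGFixedFun {K E X : Type*} [Field K] [Field E] [Algebra K E]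
    (ρ : (E ≃ₐ[K] E) →* Equiv.Perm X) (f : X → E) : Prop :=
  ∀ (g : E ≃ₐ[K] E) (y : X), g (f ((ρ g)⁻¹ y)) = f y

/-- `z ∈ E[N]` is fixed by the action of `G = Gal(E/K)` on the group algebra `E[N]`, where `G`
acts on coefficients as Galois automorphisms and on `N` by conjugation via `ρ`. -/
def IsGFixedAlg {K E X : Type*} [Field K] [Field E] [Algebra K E]
    (ρ : (E ≃ₐ[K] E) →* Equiv.Perm X) (N : Subgroup (Equiv.Perm X))
    (z : MonoidAlgebra E ↥N) : Prop :=
  ∀ (g : E ≃ₐ[K] E) (η : Equiv.Perm X) (h : η ∈ N) (h' : ρ g * η * (ρ g)⁻¹ ∈ N),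
    g (z.coeff ⟨η, h⟩) = z.coeff ⟨ρ g * η * (ρ g)⁻¹, h'⟩

/-!
Since `f` is `G`-fixed, `z ↦ z • f` is `G`-equivariant, and the `G`-fixed functions span
`Map(X, E)` over `E` (Dedekind's independence of characters). Hence, when `|N| = |X|`, `f` is a
fixed generator for `E[N]` exactly when `z ↦ z • f` is an `E`-linear bijection
`E[N] → Map(X, E)`: the inverse of an equivariant bijection preserves fixed points.

The centralizer `N'` of the regular group `N` is again regular and normalized by `ρ(G)`, and
the actions of `E[N]` and `E[N']` commute. So if `E[N] • f = Map(X, E)` and `z' • f = 0`, then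
`z'` kills `E[N] • f`, i.e. everything, and `z' = 0` because `N'` acts freely; a dimension count
turns this injectivity into surjectivity for `N'`, and the roles of `N` and `N'` are symmetric.
-/
open Equiv Function

section PermAct

variable {E X : Type*} [Field E]

noncomputable def permActLin (N : Subgroup (Perm X)) (f : X → E) :
    MonoidAlgebra E N →ₗ[E] (X → E) :=
  Finsupp.linearCombination E (fun (η : N) y => f ((η : Perm X)⁻¹ y)) ∘ₗ
    (MonoidAlgebra.coeffLinearEquiv E).toLinearMap

lemma permActLin_apply (N : Subgroup (Perm X)) (f : X → E) (z : MonoidAlgebra E N) :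
    permActLin N f z = permAct N z f := by
  ext y
  simp only [permActLin, LinearMap.coe_comp, LinearEquiv.coe_coe, comp_apply,
    Finsupp.linearCombination_apply, Finsupp.sum, Finset.sum_apply, Pi.smul_apply, smul_eq_mul]
  rfl

lemma permAct_eq_sum (N : Subgroup (Perm X)) [Fintype N] (z : MonoidAlgebra E N) (f : X → E)
    (y : X) : permAct N z f y = ∑ η : N, z.coeff η * f ((η : Perm X)⁻¹ y) :=
  Finsupp.sum_fintype _ _ fun _ => zero_mul _

lemma permAct_zero_right (N : Subgroup (Perm X)) (z : MonoidAlgebra E N) :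
    permAct N z (0 : X → E) = 0 := by
  funext y
  simp [permAct]

lemma permAct_comm {N M : Subgroup (Perm X)} [Finite N] [Finite M]
    (hcomm : ∀ a ∈ N, ∀ b ∈ M, Commute a b)
    (z : MonoidAlgebra E N) (w : MonoidAlgebra E M) (f : X → E) :
    permAct N z (permAct M w f) = permAct M w (permAct N z f) := by
  have := Fintype.ofFinite N
  have := Fintype.ofFinite M
  ext y
  simp only [permAct_eq_sum, Finset.mul_sum]
  rw [Finset.sum_comm]
  refine Finset.sum_congr rfl fun μ _ => Finset.sum_congr rfl fun η _ => ?_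
  rw [← Perm.mul_apply, ← Perm.mul_apply, ← mul_inv_rev, ← mul_inv_rev,
    (hcomm η η.2 μ μ.2).eq, mul_left_comm]

lemma permAct_single_apply [DecidableEq X] {N : Subgroup (Perm X)} {x₀ : X}
    (hinj : Injective fun η : N => (η : Perm X) x₀) (z : MonoidAlgebra E N) (η₀ : N) :
    permAct N z (Pi.single x₀ 1) ((η₀ : Perm X) x₀) = z.coeff η₀ := by
  rw [permAct, Finsupp.sum_eq_single η₀]
  · simp
  · intro η _ hne
    rw [Pi.single_apply, if_neg, mul_zero]
    rw [Perm.inv_eq_iff_eq]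
    exact fun h => hne (hinj h.symm)
  · simp

lemma eq_zero_of_forall_permAct_eq_zero {N : Subgroup (Perm X)} {x₀ : X}
    (hinj : Injective fun η : N => (η : Perm X) x₀) {z : MonoidAlgebra E N}
    (h : ∀ m : X → E, permAct N z m = 0) : z = 0 := by
  classical
  ext η
  simpa [permAct_single_apply hinj] using congrFun (h (Pi.single x₀ 1)) ((η : Perm X) x₀)

end PermAct

section Centralizer

variable {X : Type*}

lemma Subgroup.normalizer_le_normalizer_centralizer {G : Type*} [Group G] (H : Subgroup G) :
    Subgroup.normalizer (H : Set G) ≤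
      Subgroup.normalizer (Subgroup.centralizer (H : Set G) : Set G) := by
  have key : ∀ σ ∈ Subgroup.normalizer (H : Set G), ∀ η ∈ Subgroup.centralizer (H : Set G),
      σ * η * σ⁻¹ ∈ Subgroup.centralizer (H : Set G) := by
    intro σ hσ η hη μ hμ
    have hc : σ⁻¹ * μ * σ * η = η * (σ⁻¹ * μ * σ) :=
      hη _ ((Subgroup.mem_normalizer_iff''.1 hσ μ).1 hμ)
    calc μ * (σ * η * σ⁻¹) = σ * (σ⁻¹ * μ * σ * η) * σ⁻¹ := by group
      _ = σ * (η * (σ⁻¹ * μ * σ)) * σ⁻¹ := by rw [hc]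
      _ = σ * η * σ⁻¹ * μ := by group
  intro σ hσ
  refine Subgroup.mem_normalizer_iff.2 fun η => ⟨key σ hσ η, fun h => ?_⟩
  simpa [mul_assoc] using key σ⁻¹ (inv_mem hσ) _ h

lemma injective_centralizer_apply {N : Subgroup (Perm X)} {x₀ : X}
    (htrans : Surjective fun η : N => (η : Perm X) x₀) :
    Injective fun σ : Subgroup.centralizer (N : Set (Perm X)) => (σ : Perm X) x₀ := by
  intro a b hab
  ext w
  obtain ⟨η, rfl⟩ := htrans w
  have ha : η * (a : Perm X) = a * η := a.2 η η.2
  have hb : η * (b : Perm X) = b * η := b.2 η η.2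
  simp only at hab
  rw [← Perm.mul_apply, ← ha, Perm.mul_apply, hab, ← Perm.mul_apply, hb, Perm.mul_apply]

/-- `ν ∈ N` gives the permutation `η x₀ ↦ (η * ν) x₀`, which centralizes `N` because right
multiplication commutes with left multiplication. -/
lemma surjective_centralizer_apply {N : Subgroup (Perm X)} {x₀ : X}
    (hreg : Bijective fun η : N => (η : Perm X) x₀) :
    Surjective fun σ : Subgroup.centralizer (N : Set (Perm X)) => (σ : Perm X) x₀ := by
  set b : N ≃ X := Equiv.ofBijective _ hreg
  intro y
  obtain ⟨ν, rfl⟩ := hreg.2 y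
  let σ : Perm X := (b.symm.trans (Equiv.mulRight ν)).trans b
  have hσ : ∀ η : N, σ (b η) = b (η * ν) := by simp [σ]
  refine ⟨⟨σ, fun μ hμ => ?_⟩, by simpa [b] using hσ 1⟩
  ext w
  obtain ⟨η, rfl⟩ := b.surjective w
  change μ (σ (b η)) = σ (b (⟨μ, hμ⟩ * η))
  rw [hσ, hσ, mul_assoc]
  rfl

lemma bijective_centralizer_apply {N : Subgroup (Perm X)} {x₀ : X}
    (hreg : Bijective fun η : N => (η : Perm X) x₀) :
    Bijective fun σ : Subgroup.centralizer (N : Set (Perm X)) => (σ : Perm X) x₀ :=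
  ⟨injective_centralizer_apply hreg.2, surjective_centralizer_apply hreg⟩

end Centralizer

section Galois

variable {K E X : Type*} [Field K] [Field E] [Algebra K E] (ρ : (E ≃ₐ[K] E) →* Perm X)

lemma isGFixedFun_sum_single [Fintype (E ≃ₐ[K] E)] [DecidableEq X] (c : E) (x : X) :
    IsGFixedFun ρ (∑ g : E ≃ₐ[K] E, Pi.single (ρ g x) (g c)) := by
  intro h y
  simp only [Finset.sum_apply, map_sum]
  refine Fintype.sum_equiv (Equiv.mulLeft h) _ _ fun g => ?_
  rw [Pi.single_apply, Pi.single_apply, apply_ite h, map_zero]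
  simp [Equiv.symm_apply_eq, AlgEquiv.mul_apply]

lemma eq_zero_of_forall_isGFixedFun [FiniteDimensional K E] [Finite X]
    (φ : (X → E) →ₗ[E] E) (hφ : ∀ m, IsGFixedFun ρ m → φ m = 0) : φ = 0 := by
  classical
  have hchar : LinearIndependent E fun g : E ≃ₐ[K] E => (g : E → E) :=
    (linearIndependent_monoidHom E E).comp (fun g : E ≃ₐ[K] E => (g : E →* E))
      fun g g' h => by ext a; exact DFunLike.congr_fun h a
  have hφsingle : ∀ x c, φ (Pi.single x c) = c * φ (Pi.single x 1) := fun x c => by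
    rw [← smul_eq_mul, ← map_smul, ← Pi.single_smul', smul_eq_mul, mul_one]
  have hsingle : ∀ x, φ (Pi.single x 1) = 0 := by
    intro x
    have hsum : ∑ g : E ≃ₐ[K] E, φ (Pi.single (ρ g x) 1) • (g : E → E) = 0 := by
      funext c
      have := hφ _ (isGFixedFun_sum_single ρ c x)
      rw [map_sum, Finset.sum_congr rfl fun g _ => hφsingle _ _] at this
      simpa [mul_comm] using this
    simpa using Fintype.linearIndependent_iff.1 hchar _ hsum 1
  refine LinearMap.pi_ext fun x c => ?_
  rw [hφsingle, hsingle, mul_zero, LinearMap.zero_apply]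

lemma span_isGFixedFun_eq_top [FiniteDimensional K E] [Finite X] :
    Submodule.span E {m : X → E | IsGFixedFun ρ m} = ⊤ := by
  by_contra h
  obtain ⟨φ, hφ, hle⟩ := Submodule.exists_le_ker_of_lt_top _ (lt_top_iff_ne_top.2 h)
  exact hφ (eq_zero_of_forall_isGFixedFun ρ φ fun m hm => hle (Submodule.subset_span hm))

variable {N : Subgroup (Perm X)} (hρ : ∀ g, ρ g ∈ Subgroup.normalizer (N : Set (Perm X)))

def galConj : (E ≃ₐ[K] E) →* MulAut N :=
  N.normalizerMonoidHom.comp (ρ.codRestrict _ hρ)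

lemma coe_galConj_apply (g : E ≃ₐ[K] E) (η : N) :
    ((galConj ρ hρ g η : N) : Perm X) = ρ g * η * (ρ g)⁻¹ := rfl

noncomputable def galAct (g : E ≃ₐ[K] E) (z : MonoidAlgebra E N) : MonoidAlgebra E N :=
  .ofCoeff ((z.coeff.mapRange g (map_zero g)).equivMapDomain (galConj ρ hρ g).toEquiv)

lemma coeff_galAct_galConj (g : E ≃ₐ[K] E) (z : MonoidAlgebra E N) (η : N) :
    (galAct ρ hρ g z).coeff (galConj ρ hρ g η) = g (z.coeff η) := by
  simp [galAct]

lemma isGFixedAlg_of_forall_galAct_eq {z : MonoidAlgebra E N} (h : ∀ g, galAct ρ hρ g z = z) :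
    IsGFixedAlg ρ N z := by
  intro g η hη hη'
  conv_rhs => rw [← h g]
  exact (coeff_galAct_galConj ρ hρ g z ⟨η, hη⟩).symm

lemma permAct_galAct [Finite N] {f : X → E} (hf : IsGFixedFun ρ f) (g : E ≃ₐ[K] E)
    (z : MonoidAlgebra E N) (y : X) :
    permAct N (galAct ρ hρ g z) f y = g (permAct N z f ((ρ g)⁻¹ y)) := by
  have := Fintype.ofFinite N
  rw [permAct_eq_sum, permAct_eq_sum, map_sum]
  refine (Fintype.sum_equiv (galConj ρ hρ g).toEquiv _ _ fun η => ?_).symm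
  rw [MulEquiv.toEquiv_eq_coe, MulEquiv.coe_toEquiv, coeff_galAct_galConj, map_mul,
    coe_galConj_apply, ← hf g ((ρ g * η * (ρ g)⁻¹)⁻¹ y)]
  simp [Perm.mul_apply]

end Galois

section Generation

variable {K E X : Type*} [Field K] [Field E] [Algebra K E] [Finite X]

lemma injective_iff_surjective_permActLin {N : Subgroup (Perm X)} [Finite N]
    (hcard : Nat.card N = Nat.card X) (f : X → E) :
    Injective (permActLin N f) ↔ Surjective (permActLin N f) := by
  have := Module.Finite.of_basis (MonoidAlgebra.basis N E)
  refine LinearMap.injective_iff_surjective_of_finrank_eq_finrank ?_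
  rw [Module.finrank_eq_nat_card_basis (MonoidAlgebra.basis N E),
    Module.finrank_eq_nat_card_basis (Pi.basisFun E X), hcard]

lemma forall_isGFixedFun_exists_iff_surjective [FiniteDimensional K E]
    (ρ : (E ≃ₐ[K] E) →* Perm X) {N : Subgroup (Perm X)} [Finite N]
    (hρ : ∀ g, ρ g ∈ Subgroup.normalizer (N : Set (Perm X))) (hcard : Nat.card N = Nat.card X)
    {f : X → E} (hf : IsGFixedFun ρ f) :
    (∀ m : X → E, IsGFixedFun ρ m →
        ∃ z : MonoidAlgebra E N, IsGFixedAlg ρ N z ∧ permAct N z f = m) ↔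
      Surjective (permActLin N f) := by
  constructor
  · intro h
    rw [← LinearMap.range_eq_top, eq_top_iff, ← span_isGFixedFun_eq_top ρ, Submodule.span_le]
    intro m hm
    obtain ⟨z, -, rfl⟩ := h m hm
    exact ⟨z, permActLin_apply N f z⟩
  · intro hsurj m hm
    have hinj := (injective_iff_surjective_permActLin hcard f).2 hsurj
    obtain ⟨z, rfl⟩ := hsurj m
    -- `z ↦ z • f` is injective and `G`-equivariant, so it reflects `G`-fixed points
    refine ⟨z, isGFixedAlg_of_forall_galAct_eq ρ hρ fun g => hinj ?_,
      (permActLin_apply N f z).symm⟩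
    ext y
    rw [permActLin_apply, permActLin_apply, permAct_galAct ρ hρ hf, ← permActLin_apply]
    exact hm g y

lemma surjective_permActLin_of_commute {N M : Subgroup (Perm X)} [Finite N] [Finite M] {x₀ : X}
    (hreg : Bijective fun η : M => (η : Perm X) x₀) (hcomm : ∀ a ∈ N, ∀ b ∈ M, Commute a b)
    {f : X → E} (hsurj : Surjective (permActLin N f)) : Surjective (permActLin M f) := by
  rw [← injective_iff_surjective_permActLin (Nat.card_eq_of_bijective _ hreg),
    injective_iff_map_eq_zero]
  intro w hw
  rw [permActLin_apply] at hw
  refine eq_zero_of_forall_permAct_eq_zero hreg.1 fun m => ?_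
  obtain ⟨z, rfl⟩ := hsurj m
  rw [permActLin_apply, ← permAct_comm hcomm, hw, permAct_zero_right]

end Generation

theorem fixed_generator_iff_fixed_generator_centralizer_general
    {K E X : Type*} [Field K] [Field E] [Algebra K E]
    [FiniteDimensional K E]
    [Fintype X] [Nonempty X]
    (ρ : (E ≃ₐ[K] E) →* Equiv.Perm X)
    (N : Subgroup (Equiv.Perm X))
    (htrans : ∀ y z : X, ∃ η ∈ N, η y = z)
    (hcard : Nat.card N = Nat.card X)
    (hnorm : ∀ (g : E ≃ₐ[K] E) (η : Equiv.Perm X), η ∈ N ↔ ρ g * η * (ρ g)⁻¹ ∈ N)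
    (f : X → E) (hf : IsGFixedFun ρ f) :
    (∀ m : X → E, IsGFixedFun ρ m →
        ∃ z : MonoidAlgebra E ↥N, IsGFixedAlg ρ N z ∧ permAct N z f = m) ↔
      (∀ m : X → E, IsGFixedFun ρ m →
        ∃ z' : MonoidAlgebra E ↥(Subgroup.centralizer (N : Set (Equiv.Perm X))),
          IsGFixedAlg ρ (Subgroup.centralizer (N : Set (Equiv.Perm X))) z' ∧
            permAct (Subgroup.centralizer (N : Set (Equiv.Perm X))) z' f = m) := by
  obtain ⟨x₀⟩ := ‹Nonempty X›
  have hreg : Bijective fun η : N => (η : Perm X) x₀ :=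
    Surjective.bijective_of_nat_card_le (fun y => by simpa using htrans x₀ y) hcard.le
  have hreg' := bijective_centralizer_apply hreg
  have hρ : ∀ g, ρ g ∈ Subgroup.normalizer (N : Set (Perm X)) :=
    fun g => Subgroup.mem_normalizer_iff.2 (hnorm g)
  have hcomm : ∀ a ∈ N, ∀ b ∈ Subgroup.centralizer (N : Set (Perm X)), Commute a b :=
    fun a ha b hb => hb a ha
  rw [forall_isGFixedFun_exists_iff_surjective ρ hρ hcard hf,
    forall_isGFixedFun_exists_iff_surjective ρ
      (fun g => N.normalizer_le_normalizer_centralizer (hρ g))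
      (Nat.card_eq_of_bijective _ hreg') hf]
  exact ⟨surjective_permActLin_of_commute hreg' hcomm,
    surjective_permActLin_of_commute hreg fun a ha b hb => (hcomm b hb a ha).symm⟩

/-- Theorem 1.1, stated at the level of the fixed-point model `M^G` of `L`: let `N ≤ Perm X`
be a regular subgroup normalized by `ρ(G)`, let `N' = Cent_{Perm X}(N)` (with the analogous
`G`-action on `E[N']`), and let `f : X → E` be `G`-fixed. Then every `G`-fixed `m : X → E`
has the form `m = z • f` for some `G`-fixed `z ∈ E[N]` if and only if every `G`-fixed
`m : X → E` has the form `m = z' • f` for some `G`-fixed `z' ∈ E[N']`. -/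
theorem fixed_generator_iff_fixed_generator_centralizer
    {K E X : Type*} [Field K] [Field E] [Algebra K E]
    [FiniteDimensional K E] [IsGalois K E]
    [Fintype X] [Nonempty X]
    (ρ : (E ≃ₐ[K] E) →* Equiv.Perm X)
    (N : Subgroup (Equiv.Perm X))
    (htrans : ∀ y z : X, ∃ η ∈ N, η y = z)
    (hcard : Nat.card N = Nat.card X)
    (hnorm : ∀ (g : E ≃ₐ[K] E) (η : Equiv.Perm X), η ∈ N ↔ ρ g * η * (ρ g)⁻¹ ∈ N)
    (f : X → E) (hf : IsGFixedFun ρ f) :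
    (∀ m : X → E, IsGFixedFun ρ m →
        ∃ z : MonoidAlgebra E ↥N, IsGFixedAlg ρ N z ∧ permAct N z f = m) ↔
      (∀ m : X → E, IsGFixedFun ρ m →
        ∃ z' : MonoidAlgebra E ↥(Subgroup.centralizer (N : Set (Equiv.Perm X))),
          IsGFixedAlg ρ (Subgroup.centralizer (N : Set (Equiv.Perm X))) z' ∧
            permAct (Subgroup.centralizer (N : Set (Equiv.Perm X))) z' f = m) :=
  fixed_generator_iff_fixed_generator_centralizer_general ρ N htrans hcard hnorm f hf
end

section
/- Let N₁, N₂ ≤ Perm(X) be regular subgroups such that every element of N₁ commutes with every element of N₂ (η₁ η₂ = η₂ η₁ for all η₁ ∈ N₁, η₂ ∈ N₂). Then N₂ = Cent_{Perm(X)}(N₁), the centralizer of N₁ in Perm(X). (Group-theoretic core of Proposition 2.5.) -/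
/-- Group-theoretic core of Proposition 2.5: if `N₁`, `N₂` are regular subgroups of `Perm X`
(`X` finite nonempty) which commute elementwise, then `N₂` is the centralizer of `N₁` in
`Perm X`. -/
theorem commuting_regular_subgroups_centralizer
    {X : Type*} [Fintype X] [Nonempty X] (N₁ N₂ : Subgroup (Equiv.Perm X))
    (htrans₁ : ∀ y z : X, ∃ η ∈ N₁, η y = z)
    (hcard₁ : Nat.card N₁ = Nat.card X)
    (htrans₂ : ∀ y z : X, ∃ η ∈ N₂, η y = z)
    (hcard₂ : Nat.card N₂ = Nat.card X)
    (hcomm : ∀ η₁ ∈ N₁, ∀ η₂ ∈ N₂, η₁ * η₂ = η₂ * η₁) :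
    N₂ = Subgroup.centralizer (N₁ : Set (Equiv.Perm X)) := by
  set C := Subgroup.centralizer (N₁ : Set (Equiv.Perm X)) with hC
  have hle : N₂ ≤ C := by
    intro σ hσ η hη
    exact hcomm η hη σ hσ
  obtain ⟨x₀⟩ := (inferInstance : Nonempty X)
  -- the evaluation map C → X at x₀ is injective
  have hinj : Function.Injective (fun σ : C => (σ : Equiv.Perm X) x₀) := by
    intro σ₁ σ₂ h
    simp only at h
    ext1
    ext x
    obtain ⟨η, hη, hx⟩ := htrans₁ x₀ x
    have h₁ : (σ₁ : Equiv.Perm X) * η = η * (σ₁ : Equiv.Perm X) := (σ₁.2 η hη).symm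
    have h₂ : (σ₂ : Equiv.Perm X) * η = η * (σ₂ : Equiv.Perm X) := (σ₂.2 η hη).symm
    calc (σ₁ : Equiv.Perm X) x = ((σ₁ : Equiv.Perm X) * η) x₀ := by rw [Equiv.Perm.mul_apply, hx]
      _ = η ((σ₁ : Equiv.Perm X) x₀) := by rw [h₁, Equiv.Perm.mul_apply]
      _ = η ((σ₂ : Equiv.Perm X) x₀) := by rw [h]
      _ = ((σ₂ : Equiv.Perm X) * η) x₀ := by rw [h₂, Equiv.Perm.mul_apply]
      _ = (σ₂ : Equiv.Perm X) x := by rw [Equiv.Perm.mul_apply, hx]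
  have hcardC : Nat.card C ≤ Nat.card X := Nat.card_le_card_of_injective _ hinj
  exact (Subgroup.eq_of_le_of_card_ge hle (hcardC.trans hcard₂.ge))
end

section
/- Suppose f : X → E is G-fixed. Then f generates Map(X,E) as an E[N]-module (i.e., for every m : X → E there exists z ∈ E[N] with z • f = m) if and only if every G-fixed m : X → E has the form m = z • f for some G-fixed z ∈ E[N]. (Lemma 3.1: an element f ∈ M^G is an E[N]^G-generator of M^G if and only if it is an E[N]-generator of M.) -/
/-
Galois descent for `Map(X, E)` with its semilinear `G`-action: the `G`-fixed functions span it
over `E`, by Dedekind's independence of the characters `g : E → E`. Hence `E[N]^G`-generation of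
the fixed functions already gives `E[N]`-generation. Conversely, if `z • f = m` with `m` fixed,
then `∑ g, g · (c z)` for `c` of trace `1` is a fixed element sent to `m`, because `z ↦ z • f`
is `G`-equivariant when `f` is fixed.
-/

section GaloisDescent

variable {K E V : Type*} [Field K] [Field E] [Algebra K E]
  [AddCommGroup V] (σ : (E ≃ₐ[K] E) →* AddMonoid.End V)

def fixedVectors : Set V := {v | ∀ g, σ g v = v}

variable [FiniteDimensional K E]

noncomputable def galoisTrace (v : V) : V := ∑ g, σ g v

theorem galoisTrace_mem_fixedVectors (v : V) : galoisTrace σ v ∈ fixedVectors σ := fun h => by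
  simp only [galoisTrace, map_sum]
  exact Fintype.sum_bijective _ (Group.mulLeft_bijective h) _ _ fun g => by simp

variable [Module E V]

theorem galoisTrace_smul_of_mem_fixedVectors [IsGalois K E]
    (hσ : ∀ g (c : E) v, σ g (c • v) = g c • σ g v) {v : V} (hv : v ∈ fixedVectors σ) (c : E) :
    galoisTrace σ (c • v) = algebraMap K E (Algebra.trace K E c) • v := by
  simp only [galoisTrace, hσ, hv _, trace_eq_sum_automorphisms, Finset.sum_smul]

theorem span_fixedVectors_eq_top (hσ : ∀ g (c : E) v, σ g (c • v) = g c • σ g v) :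
    Submodule.span E (fixedVectors σ) = ⊤ := by
  refine Submodule.eq_top_iff'.2 fun v => by_contra fun hv => ?_
  obtain ⟨φ, hφv, hφ⟩ := Submodule.exists_dual_map_eq_bot_of_notMem hv inferInstance
  have hφ_fixed : ∀ w ∈ fixedVectors σ, φ w = 0 := fun w hw =>
    (Submodule.mem_bot E).1 (hφ ▸ Submodule.mem_map_of_mem (Submodule.subset_span hw))
  -- Dedekind: the trace of `c • v` is fixed, so `∑ g, φ (σ g v) • g` kills every `c`.
  have hrel : ∑ g : E ≃ₐ[K] E, φ (σ g v) • (g : E →ₐ[K] E).toLinearMap = 0 := by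
    ext c
    have := hφ_fixed _ (galoisTrace_mem_fixedVectors σ (c • v))
    simpa [galoisTrace, hσ, mul_comm] using this
  have := Fintype.linearIndependent_iff.1
    ((linearIndependent_toLinearMap K E E).comp _ AlgEquiv.coe_toAlgHom_injective) _ hrel 1
  exact hφv (by simpa using this)

theorem exists_mem_fixedVectors_map_eq [IsGalois K E] {W : Type*} [AddCommGroup W] [Module E W]
    (τ : (E ≃ₐ[K] E) →* AddMonoid.End W) (hτ : ∀ g (c : E) w, τ g (c • w) = g c • τ g w)
    (φ : V →ₗ[E] W) (hφ : ∀ g v, φ (σ g v) = τ g (φ v)) {w : W} (hw : w ∈ fixedVectors τ)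
    (hwφ : w ∈ LinearMap.range φ) : ∃ v ∈ fixedVectors σ, φ v = w := by
  obtain ⟨v, rfl⟩ := hwφ
  obtain ⟨c, hc⟩ := Algebra.trace_surjective K E 1
  refine ⟨galoisTrace σ (c • v), galoisTrace_mem_fixedVectors σ _, ?_⟩
  calc φ (galoisTrace σ (c • v)) = galoisTrace τ (c • φ v) := by simp [galoisTrace, hφ]
    _ = φ v := by rw [galoisTrace_smul_of_mem_fixedVectors τ hτ hw, hc, map_one, one_smul]

end GaloisDescent

section PermutationModule

variable {K E X : Type*} [Field K] [Field E] [Algebra K E] (ρ : (E ≃ₐ[K] E) →* Equiv.Perm X)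

def funAction : (E ≃ₐ[K] E) →* AddMonoid.End (X → E) where
  toFun g := .mk' (fun m y => g (m ((ρ g)⁻¹ y))) fun m m' => by ext; simp
  map_one' := by
    ext m y
    show (1 : E ≃ₐ[K] E) (m ((ρ 1)⁻¹ y)) = m y
    simp
  map_mul' g h := by
    ext m y
    show (g * h) (m ((ρ (g * h))⁻¹ y)) = g (h (m ((ρ h)⁻¹ ((ρ g)⁻¹ y))))
    simp [Equiv.Perm.mul_apply]

theorem funAction_apply (g : E ≃ₐ[K] E) (m : X → E) (y : X) :
    funAction ρ g m y = g (m ((ρ g)⁻¹ y)) := rfl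

theorem funAction_smul (g : E ≃ₐ[K] E) (c : E) (m : X → E) :
    funAction ρ g (c • m) = g c • funAction ρ g m := by
  ext; simp [funAction_apply]

theorem isGFixedFun_iff_mem_fixedVectors (m : X → E) :
    IsGFixedFun ρ m ↔ m ∈ fixedVectors (funAction ρ) := by
  simp only [IsGFixedFun, fixedVectors, Set.mem_ofPred_eq, funext_iff, funAction_apply]

variable (N : Subgroup (Equiv.Perm X))
  (hnorm : ∀ (g : E ≃ₐ[K] E) (η : Equiv.Perm X), η ∈ N ↔ ρ g * η * (ρ g)⁻¹ ∈ N)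

def conjSubgroup (g : E ≃ₐ[K] E) : N ≃ N :=
  (MulAut.conj (ρ g)).toEquiv.subtypeEquiv (hnorm g)

theorem coe_conjSubgroup_symm_apply (g : E ≃ₐ[K] E) (η : N) :
    ((conjSubgroup ρ N hnorm g).symm η : Equiv.Perm X) = (ρ g)⁻¹ * η * ρ g := by
  simp [conjSubgroup, mul_assoc]

noncomputable def algAction : (E ≃ₐ[K] E) →* AddMonoid.End (MonoidAlgebra E N) where
  toFun g := .mk' (fun z => .ofCoeff <|
      (z.coeff.mapRange g (map_zero g)).equivMapDomain (conjSubgroup ρ N hnorm g))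
    fun z w => by ext; simp
  map_one' := by
    ext z η
    show (1 : E ≃ₐ[K] E) (z.coeff ((conjSubgroup ρ N hnorm 1).symm η)) = z.coeff η
    rw [AlgEquiv.one_apply]
    congr 1
    ext1
    simp [coe_conjSubgroup_symm_apply]
  map_mul' g h := by
    ext z η
    show (g * h) (z.coeff ((conjSubgroup ρ N hnorm (g * h)).symm η)) =
      g (h (z.coeff ((conjSubgroup ρ N hnorm h).symm ((conjSubgroup ρ N hnorm g).symm η))))
    rw [AlgEquiv.mul_apply]
    congr 3
    ext1
    simp [coe_conjSubgroup_symm_apply, mul_assoc]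

theorem algAction_coeff (g : E ≃ₐ[K] E) (z : MonoidAlgebra E N) :
    (algAction ρ N hnorm g z).coeff =
      (z.coeff.mapRange g (map_zero g)).equivMapDomain (conjSubgroup ρ N hnorm g) := rfl

theorem algAction_coeff_conjSubgroup (g : E ≃ₐ[K] E) (z : MonoidAlgebra E N) (η : N) :
    (algAction ρ N hnorm g z).coeff (conjSubgroup ρ N hnorm g η) = g (z.coeff η) := by
  show g (z.coeff ((conjSubgroup ρ N hnorm g).symm (conjSubgroup ρ N hnorm g η))) = _
  rw [Equiv.symm_apply_apply]

theorem isGFixedAlg_iff_mem_fixedVectors (z : MonoidAlgebra E N) :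
    IsGFixedAlg ρ N z ↔ z ∈ fixedVectors (algAction ρ N hnorm) := by
  have key (g : E ≃ₐ[K] E) : algAction ρ N hnorm g z = z ↔
      ∀ η : N, g (z.coeff η) = z.coeff (conjSubgroup ρ N hnorm g η) := by
    rw [MonoidAlgebra.ext_iff, Finsupp.ext_iff, ← (conjSubgroup ρ N hnorm g).forall_congr_right]
    simp only [algAction_coeff_conjSubgroup]
  simp only [IsGFixedAlg, fixedVectors, Set.mem_ofPred_eq, key, Subtype.forall]
  exact forall_congr' fun g => forall_congr' fun η => forall_congr' fun hη =>
    ⟨fun h => h ((hnorm g η).1 hη), fun h _ => h⟩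

noncomputable def permActHom (f : X → E) : MonoidAlgebra E N →ₗ[E] (X → E) :=
  Finsupp.linearCombination E (fun (η : N) y => f ((η : Equiv.Perm X)⁻¹ y)) ∘ₗ
    (MonoidAlgebra.coeffLinearEquiv E).toLinearMap

theorem permActHom_apply (f : X → E) (z : MonoidAlgebra E N) :
    permActHom N f z = permAct N z f := by
  ext y
  simp [permActHom, permAct, Finsupp.linearCombination_apply, Finsupp.sum_apply']

theorem permActHom_algAction {f : X → E} (hf : IsGFixedFun ρ f) (g : E ≃ₐ[K] E)
    (z : MonoidAlgebra E N) :
    permActHom N f (algAction ρ N hnorm g z) = funAction ρ g (permActHom N f z) := by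
  ext y
  simp only [permActHom_apply, permAct, funAction_apply, algAction_coeff,
    Finsupp.sum_equivMapDomain, map_finsuppSum]
  rw [Finsupp.sum_mapRange_index fun _ => zero_mul _]
  refine Finsupp.sum_congr fun η _ => ?_
  rw [map_mul, ← hf g]
  congr 3
  simp [conjSubgroup]

end PermutationModule

theorem fixed_generator_iff_generator_general
    {K E X : Type*} [Field K] [Field E] [Algebra K E]
    [FiniteDimensional K E] [IsGalois K E]
    (ρ : (E ≃ₐ[K] E) →* Equiv.Perm X)
    (N : Subgroup (Equiv.Perm X))
    (hnorm : ∀ (g : E ≃ₐ[K] E) (η : Equiv.Perm X), η ∈ N ↔ ρ g * η * (ρ g)⁻¹ ∈ N)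
    (f : X → E) (hf : IsGFixedFun ρ f) :
    (∀ m : X → E, ∃ z : MonoidAlgebra E ↥N, permAct N z f = m) ↔
      (∀ m : X → E, IsGFixedFun ρ m →
        ∃ z : MonoidAlgebra E ↥N, IsGFixedAlg ρ N z ∧ permAct N z f = m) := by
  simp only [← permActHom_apply, isGFixedFun_iff_mem_fixedVectors,
    isGFixedAlg_iff_mem_fixedVectors ρ N hnorm]
  constructor
  · intro hgen m hm
    exact exists_mem_fixedVectors_map_eq (algAction ρ N hnorm) (funAction ρ) (funAction_smul ρ)
      (permActHom N f) (permActHom_algAction ρ N hnorm hf) hm (hgen m)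
  · intro hgen
    refine LinearMap.range_eq_top.1 (eq_top_iff.2 ?_)
    rw [← span_fixedVectors_eq_top (funAction ρ) (funAction_smul ρ), Submodule.span_le]
    intro m hm
    obtain ⟨z, -, hz⟩ := hgen m hm
    exact ⟨z, hz⟩

/-- Lemma 3.1: for a regular subgroup `N ≤ Perm X` normalized by `ρ(G)` and a `G`-fixed
`f : X → E`, the element `f` is an `E[N]^G`-generator of `Map(X,E)^G` if and only if it is an
`E[N]`-generator of `Map(X,E)`. -/
theorem fixed_generator_iff_generator
    {K E X : Type*} [Field K] [Field E] [Algebra K E]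
    [FiniteDimensional K E] [IsGalois K E]
    [Fintype X] [Nonempty X]
    (ρ : (E ≃ₐ[K] E) →* Equiv.Perm X)
    (N : Subgroup (Equiv.Perm X))
    (htrans : ∀ y z : X, ∃ η ∈ N, η y = z)
    (hcard : Nat.card N = Nat.card X)
    (hnorm : ∀ (g : E ≃ₐ[K] E) (η : Equiv.Perm X), η ∈ N ↔ ρ g * η * (ρ g)⁻¹ ∈ N)
    (f : X → E) (hf : IsGFixedFun ρ f) :
    (∀ m : X → E, ∃ z : MonoidAlgebra E ↥N, permAct N z f = m) ↔
      (∀ m : X → E, IsGFixedFun ρ m →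
        ∃ z : MonoidAlgebra E ↥N, IsGFixedAlg ρ N z ∧ permAct N z f = m) :=
  fixed_generator_iff_generator_general ρ N hnorm f hf
end

section
/- Let N ≤ Perm(X) be a regular subgroup, let N' = Cent_{Perm(X)}(N) be its centralizer in Perm(X), and let f : X → E. Then the family of functions (y ↦ f(η(y))), indexed by η ∈ N, is linearly independent over E if and only if the family of functions (y ↦ f(η'(y))), indexed by η' ∈ N', is linearly independent over E. (The determinant identity det T_N(x) = det T_{N'}(x) at the heart of the proof of Theorem 1.1.) -/
/-!
Fix `x₀ : X`. Regularity makes `η ↦ η x₀` a bijection `N ≃ X`; transporting right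
multiplication of `N` along it shows that the centralizer `N'` is regular as well. As elements
of `N` and `N'` commute, after reindexing `X` by the two orbit bijections the two families become
the rows and the columns of the square matrix `(η, η') ↦ f (η (η' x₀))`, and a square matrix has
independent rows iff it has independent columns.
-/

open Equiv Function

theorem Matrix.linearIndependent_row_iff_linearIndependent_col {m n K : Type*}
    [Fintype m] [Fintype n] [Field K] (A : Matrix m n K) (h : Fintype.card m = Fintype.card n) :
    LinearIndependent K A.row ↔ LinearIndependent K A.col := by
  rw [linearIndependent_iff_card_eq_finrank_span, linearIndependent_iff_card_eq_finrank_span,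
    Set.finrank, Set.finrank, ← rank_eq_finrank_span_row, ← rank_eq_finrank_span_cols, h]

theorem linearIndependent_comp_equiv_iff {ι X Y R : Type*} [Ring R] (v : ι → X → R)
    (e : Y ≃ X) : LinearIndependent R (fun i => v i ∘ e) ↔ LinearIndependent R v :=
  (LinearEquiv.funCongrLeft R R e).toLinearMap.linearIndependent_iff (LinearEquiv.ker _)

namespace Equiv.Perm

variable {X : Type*}

theorem apply_apply_comm_of_mem_centralizer {S : Set (Perm X)} {σ τ : Perm X} (hσ : σ ∈ S)
    (hτ : τ ∈ Subgroup.centralizer S) (x : X) : τ (σ x) = σ (τ x) :=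
  (DFunLike.congr_fun (Subgroup.mem_centralizer_iff.mp hτ σ hσ) x).symm

variable {N : Subgroup (Perm X)}

theorem bijective_apply_of_card_eq [Finite X] (htrans : ∀ y z : X, ∃ η ∈ N, η y = z)
    (hcard : Nat.card N = Nat.card X) (x₀ : X) : Bijective fun η : N => (η : Perm X) x₀ := by
  refine (Nat.bijective_iff_surjective_and_card _).mpr ⟨fun z => ?_, hcard⟩
  obtain ⟨η, hη, rfl⟩ := htrans x₀ z
  exact ⟨⟨η, hη⟩, rfl⟩

theorem injective_apply_centralizer (htrans : ∀ y z : X, ∃ η ∈ N, η y = z) (x₀ : X) :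
    Injective fun τ : Subgroup.centralizer (N : Set (Perm X)) => (τ : Perm X) x₀ := by
  intro τ₁ τ₂ h
  ext y
  obtain ⟨σ, hσ, rfl⟩ := htrans x₀ y
  rw [apply_apply_comm_of_mem_centralizer hσ τ₁.2, apply_apply_comm_of_mem_centralizer hσ τ₂.2]
  exact congrArg σ h

theorem surjective_apply_centralizer {x₀ : X} (hreg : Bijective fun η : N => (η : Perm X) x₀) :
    Surjective fun τ : Subgroup.centralizer (N : Set (Perm X)) => (τ : Perm X) x₀ := by
  set e := Equiv.ofBijective _ hreg
  have e_mul : ∀ σ η : N, e (σ * η) = (σ : Perm X) (e η) := fun _ _ => rfl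
  intro z
  -- right multiplication on `N` commutes with left multiplication
  refine ⟨⟨e.permCongr (Equiv.mulRight (e.symm z)), ?_⟩, ?_⟩
  · refine Subgroup.mem_centralizer_iff.mpr fun σ hσ => ?_
    ext y
    obtain ⟨η, rfl⟩ := e.surjective y
    have : e.symm (σ (e η)) = ⟨σ, hσ⟩ * η := e.symm_apply_eq.mpr rfl
    simp [this, mul_assoc, e_mul]
  · have : e.symm x₀ = 1 := e.symm_apply_eq.mpr rfl
    simp [this]

end Equiv.Perm

/-- The determinant identity `det T_N(x) = det T_{N'}(x)` at the heart of the proof of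
Theorem 1.1, stated via linear independence: for a regular subgroup `N ≤ Perm X` (`X` finite
nonempty) with centralizer `N' = Cent_{Perm X}(N)` and `f : X → E`, the family
`(y ↦ f (η y))_{η ∈ N}` is linearly independent over `E` if and only if the family
`(y ↦ f (η' y))_{η' ∈ N'}` is linearly independent over `E`. -/
theorem linearIndependent_iff_linearIndependent_centralizer
    {X E : Type*} [Fintype X] [Nonempty X] [Field E]
    (N : Subgroup (Equiv.Perm X))
    (htrans : ∀ y z : X, ∃ η ∈ N, η y = z)
    (hcard : Nat.card N = Nat.card X)
    (f : X → E) :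
    LinearIndependent E (fun η : ↥N => (fun y : X => f ((η : Equiv.Perm X) y))) ↔
      LinearIndependent E
        (fun η' : ↥(Subgroup.centralizer (N : Set (Equiv.Perm X))) =>
          (fun y : X => f ((η' : Equiv.Perm X) y))) := by
  classical
  obtain ⟨x₀⟩ := ‹Nonempty X›
  set C := Subgroup.centralizer (N : Set (Perm X))
  have hN := Perm.bijective_apply_of_card_eq htrans hcard x₀
  have hC : Bijective fun τ : C => (τ : Perm X) x₀ :=
    ⟨Perm.injective_apply_centralizer htrans x₀, Perm.surjective_apply_centralizer hN⟩
  let eN := Equiv.ofBijective _ hN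
  let eC := Equiv.ofBijective _ hC
  let A : Matrix N C E := fun η τ => f ((η : Perm X) ((τ : Perm X) x₀))
  have hrow : (fun η : N => (fun y => f ((η : Perm X) y)) ∘ eC) = A.row := rfl
  have hcol : (fun τ : C => (fun y => f ((τ : Perm X) y)) ∘ eN) = A.col := by
    ext τ η
    exact congrArg f (Perm.apply_apply_comm_of_mem_centralizer η.2 τ.2 x₀)
  rw [← linearIndependent_comp_equiv_iff _ eC, ← linearIndependent_comp_equiv_iff _ eN, hrow, hcol]
  exact A.linearIndependent_row_iff_linearIndependent_col (Fintype.card_congr (eN.trans eC.symm))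
end

section
/- Let x ∈ L be such that the evaluation map H₂ → L given by h ↦ h • x is bijective, and let 𝔅 ⊆ L be a subset satisfying 𝔅 = {a • x : a ∈ 𝔄₁(𝔅)}. Let 𝔐 be a subring of H₁ containing 𝔄₁(𝔅), and set Δ = {μ • x : μ ∈ 𝔐}. If Δ ≠ 𝔅, then 𝔄₂(𝔅) is properly contained in 𝔄₂(Δ). (Key step in the proof of Proposition 4.2: enlarging the order on the H₁-side strictly enlarges the associated order on the H₂-side, so the associated orders in H and H' are simultaneously maximal.) -/
/-!
Write `Δ = 𝔐 • x`. If `z • x ∈ Δ`, then `z` stabilises `Δ`: for `ν ∈ 𝔐`,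
`z • (ν • x) = ν • (z • x) ∈ 𝔐 • (𝔐 • x) ⊆ Δ` because the actions commute and `𝔐` is
multiplicatively closed. Every `z` in the associated order of `𝔅` satisfies
`z • x ∈ 𝔅 ⊆ Δ`, which gives the inclusion. For strictness pick `μ • x ∈ Δ \ 𝔅` and,
by surjectivity of evaluation at `x`, some `z` with `z • x = μ • x`: it stabilises `Δ`,
but not `𝔅`, since `x ∈ 𝔅` while `z • x ∉ 𝔅`.
-/

def assocOrder (H : Type*) {L : Type*} [SMul H L] (S : Set L) : Set H :=
  {h | ∀ s ∈ S, h • s ∈ S}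

section

variable {H L : Type*} [Monoid H] [MulAction H L]

theorem one_mem_assocOrder (S : Set L) : (1 : H) ∈ assocOrder H S :=
  fun s hs => (one_smul H s).symm ▸ hs

theorem mem_of_eq_image_assocOrder {B : Set L} {x : L}
    (hB : B = (fun a : H => a • x) '' assocOrder H B) : x ∈ B := by
  rw [hB]
  exact ⟨1, one_mem_assocOrder B, one_smul H x⟩

end

theorem mem_assocOrder_image_of_smul_mem {H₁ H₂ L S : Type*} [Monoid H₁] [MulAction H₁ L]
    [SMul H₂ L] [SMulCommClass H₁ H₂ L] [SetLike S H₁] [MulMemClass S H₁] (M : S) {x : L}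
    {z : H₂} (hz : z • x ∈ (fun μ : H₁ => μ • x) '' (M : Set H₁)) :
    z ∈ assocOrder H₂ ((fun μ : H₁ => μ • x) '' (M : Set H₁)) := by
  obtain ⟨μ, hμ, hμz⟩ := hz
  rintro _ ⟨ν, hν, rfl⟩
  refine ⟨ν * μ, mul_mem hν hμ, ?_⟩
  simp only [mul_smul, hμz, smul_comm ν z x]

/-- Key step in the proof of Proposition 4.2: with commuting module structures of `H₁`, `H₂`
on `L`, suppose `x` is a free generator (the evaluation `H₂ → L` is bijective) and `𝔅` is
freely generated by `x` over its associated order `𝔄₁(𝔅)` in `H₁`. If `𝔐` is a subring of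
`H₁` containing `𝔄₁(𝔅)` and `Δ = 𝔐 • x ≠ 𝔅`, then the associated order of `𝔅` in `H₂` is
properly contained in the associated order of `Δ` in `H₂`. -/
theorem enlarging_order_enlarges_associated_order
    {H₁ H₂ L : Type*} [Ring H₁] [Ring H₂] [AddCommGroup L]
    [Module H₁ L] [Module H₂ L]
    (hcomm : ∀ (h₁ : H₁) (h₂ : H₂) (l : L), h₁ • (h₂ • l) = h₂ • (h₁ • l))
    (x : L) (hx : Function.Bijective (fun h : H₂ => h • x))
    (𝔅 : Set L)
    (h𝔅 : 𝔅 = (fun a : H₁ => a • x) '' {a : H₁ | ∀ b ∈ 𝔅, a • b ∈ 𝔅})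
    (𝔐 : Subring H₁)
    (h𝔐 : {a : H₁ | ∀ b ∈ 𝔅, a • b ∈ 𝔅} ⊆ (𝔐 : Set H₁))
    (hΔ : (fun μ : H₁ => μ • x) '' (𝔐 : Set H₁) ≠ 𝔅) :
    {z : H₂ | ∀ b ∈ 𝔅, z • b ∈ 𝔅} ⊂
      {z : H₂ | ∀ d ∈ (fun μ : H₁ => μ • x) '' (𝔐 : Set H₁),
        z • d ∈ (fun μ : H₁ => μ • x) '' (𝔐 : Set H₁)} := by
  have : SMulCommClass H₁ H₂ L := ⟨hcomm⟩
  have hx𝔅 : x ∈ 𝔅 := mem_of_eq_image_assocOrder h𝔅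
  have h𝔅Δ : 𝔅 ⊆ (fun μ : H₁ => μ • x) '' (𝔐 : Set H₁) := by
    rw [h𝔅]
    exact Set.image_mono h𝔐
  refine ⟨fun z hz => mem_assocOrder_image_of_smul_mem 𝔐 (h𝔅Δ (hz x hx𝔅)), fun hΔ𝔅 => ?_⟩
  obtain ⟨_, ⟨μ, hμ, rfl⟩, hμ𝔅⟩ := Set.exists_of_ssubset (h𝔅Δ.ssubset_of_ne hΔ.symm)
  obtain ⟨z, hz : z • x = μ • x⟩ := hx.2 (μ • x)
  have hzΔ := mem_assocOrder_image_of_smul_mem 𝔐 ⟨μ, hμ, hz.symm⟩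
  apply hμ𝔅
  show μ • x ∈ 𝔅
  exact hz ▸ hΔ𝔅 hzΔ x hx𝔅
end
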